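/- arXiv:1708.06572 — 6 statements merged into one kernel-verified Lean document; each statement's English description precedes it below -/
import Mathlib

section
/- For any $a_2 \geq 4$ and any $u \in \mathbb{R}^3$, the number $s_{\pm}(u) = -\frac{\pm\sqrt{a_2} + (a_2-1)\sqrt{|u|^2(1+|u|^2)}}{1 + (a_2-1)(1+|u|^2)}$ satisfies $-1 < s_{\pm}(u) < 1$ (for both choices of sign). -/
/-!
Both square roots are bounded by AM-GM: `√a₂ < (a₂ + 1)/2` (as `a₂ ≠ 1`) and
`√(|u|²(1 + |u|²)) ≤ |u|² + 1/2`. Hence the numerator is at most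
`(a₂ + 1)/2 + (a₂ - 1)(|u|² + 1/2)` in absolute value, which falls short of the denominator
by `(a₂ + 1)/2 - √a₂ = (√a₂ - 1)²/2 > 0`.
-/

namespace ShearSlope

lemma sqrt_lt_add_one_div_two {a : ℝ} (ha : 0 ≤ a) (ha1 : a ≠ 1) : √a < (a + 1) / 2 := by
  have hsq : √a ^ 2 = a := Real.sq_sqrt ha
  have hne : √a - 1 ≠ 0 := by
    intro h
    apply ha1
    rw [← hsq, sub_eq_zero.mp h, one_pow]
  nlinarith [pow_pos (abs_pos.mpr hne) 2, sq_abs (√a - 1)]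

lemma sqrt_mul_one_add_le {t : ℝ} (ht : 0 ≤ t) : √(t * (1 + t)) ≤ t + 1 / 2 :=
  Real.sqrt_le_iff.mpr ⟨by linarith, by nlinarith⟩

lemma abs_numerator_lt_denominator {a b σ : ℝ} (ha : 1 < a) (hb : 0 ≤ b) (hσ : |σ| ≤ 1) :
    |σ * √a + (a - 1) * √(b * (1 + b))| < 1 + (a - 1) * (1 + b) := by
  have hσa : |σ * √a| ≤ √a := by
    rw [abs_mul, abs_of_nonneg (Real.sqrt_nonneg a)]
    exact mul_le_of_le_one_left (Real.sqrt_nonneg a) hσ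
  have hroot : |(a - 1) * √(b * (1 + b))| ≤ (a - 1) * (b + 1 / 2) := by
    rw [abs_of_nonneg (by positivity)]
    exact mul_le_mul_of_nonneg_left (sqrt_mul_one_add_le hb) (by linarith)
  calc |σ * √a + (a - 1) * √(b * (1 + b))|
      ≤ |σ * √a| + |(a - 1) * √(b * (1 + b))| := abs_add_le _ _
    _ ≤ √a + (a - 1) * (b + 1 / 2) := add_le_add hσa hroot
    _ < 1 + (a - 1) * (1 + b) := by
      linarith [sqrt_lt_add_one_div_two (by linarith : 0 ≤ a) ha.ne']

end ShearSlope

open ShearSlope in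
/-- For `a₂ ≥ 4` and `u ∈ ℝ³`, the slope
`s± = -(±√a₂ + (a₂-1)√(|u|²(1+|u|²))) / (1 + (a₂-1)(1+|u|²))`
satisfies `-1 < s± < 1` for both choices of sign. -/
theorem shear_slope_bound (a2 : ℝ) (ha : 4 ≤ a2)
    (u : EuclideanSpace ℝ (Fin 3)) (σ : ℝ) (hσ : σ = 1 ∨ σ = -1) :
    -1 < -(σ * Real.sqrt a2 + (a2 - 1) * Real.sqrt (‖u‖ ^ 2 * (1 + ‖u‖ ^ 2)))
          / (1 + (a2 - 1) * (1 + ‖u‖ ^ 2)) ∧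
    -(σ * Real.sqrt a2 + (a2 - 1) * Real.sqrt (‖u‖ ^ 2 * (1 + ‖u‖ ^ 2)))
          / (1 + (a2 - 1) * (1 + ‖u‖ ^ 2)) < 1 := by
  have ha1 : 1 < a2 := by linarith
  have hσ1 : |σ| ≤ 1 := by rcases hσ with rfl | rfl <;> simp
  have hD : 0 < 1 + (a2 - 1) * (1 + ‖u‖ ^ 2) := by positivity
  rw [← abs_lt, abs_div, abs_neg, abs_of_pos hD, div_lt_one hD]
  exact abs_numerator_lt_denominator ha1 (sq_nonneg ‖u‖) hσ1
end

section
/- Let $a_2 \geq 4$, $u \in \mathbb{R}^3$, and $\theta \in [0, 2\pi]$. Define $s_{\pm}(u,\theta) = -\frac{1}{1+(a_2-1)(1+|u|^2)}\left((a_2-1)\sqrt{|u|^2}\cos\theta\sqrt{1+|u|^2} \pm \sqrt{a_2 + (a_2-1)|u|^2 - (a_2-1)|u|^2\cos^2\theta}\right)$. Then $-1 < s_{\pm}(u,\theta) < 1$ for both choices of sign. -/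
/-! With `b = a₂ - 1`, `x = √(1+|u|²)` and `y = |u| |cos θ| < x`, the numerator of `s±` is at most
`b x y + √(D - b y²)` in absolute value, where `D = 1 + b x²` is the denominator. The identity
`(D - b x y)² - (D - b y²) = b D (x - y)²` shows that this is `< D`. -/

open Real

lemma mul_add_sqrt_lt {b x y : ℝ} (hb : 0 < b) (hy : 0 ≤ y) (hyx : y < x) :
    b * x * y + √(1 + b * x ^ 2 - b * y ^ 2) < 1 + b * x ^ 2 := by
  have hgap : 0 < 1 + b * x ^ 2 - b * x * y := by
    nlinarith [mul_le_mul_of_nonneg_left hyx.le (mul_nonneg hb.le (hy.trans hyx.le))]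
  have hsq : (1 + b * x ^ 2 - b * x * y) ^ 2 - (1 + b * x ^ 2 - b * y ^ 2)
      = b * (1 + b * x ^ 2) * (x - y) ^ 2 := by ring
  have hpos : 0 < b * (1 + b * x ^ 2) * (x - y) ^ 2 := by
    have := sub_pos.2 hyx
    positivity
  have : √(1 + b * x ^ 2 - b * y ^ 2) < 1 + b * x ^ 2 - b * x * y :=
    (sqrt_lt' hgap).2 (by linarith)
  linarith

lemma abs_shear_numerator_lt {a : ℝ} (ha : 1 < a) (t c σ : ℝ) (hc : |c| ≤ 1) (hσ : |σ| = 1) :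
    |(a - 1) * √(t ^ 2) * c * √(1 + t ^ 2)
        + σ * √(a + (a - 1) * t ^ 2 - (a - 1) * t ^ 2 * c ^ 2)|
      < 1 + (a - 1) * (1 + t ^ 2) := by
  have hb : 0 < a - 1 := sub_pos.2 ha
  have hx : √(1 + t ^ 2) ^ 2 = 1 + t ^ 2 := sq_sqrt (by positivity)
  have hyx : |t| * |c| < √(1 + t ^ 2) :=
    calc |t| * |c| ≤ |t| := mul_le_of_le_one_right (abs_nonneg t) hc
      _ = √(t ^ 2) := (sqrt_sq_eq_abs t).symm
      _ < √(1 + t ^ 2) := sqrt_lt_sqrt (sq_nonneg t) (by linarith)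
  calc _ ≤ |(a - 1) * √(t ^ 2) * c * √(1 + t ^ 2)|
          + |σ * √(a + (a - 1) * t ^ 2 - (a - 1) * t ^ 2 * c ^ 2)| := abs_add_le _ _
    _ = (a - 1) * √(1 + t ^ 2) * (|t| * |c|)
          + √(1 + (a - 1) * √(1 + t ^ 2) ^ 2 - (a - 1) * (|t| * |c|) ^ 2) := by
        rw [hx, mul_pow, sq_abs, sq_abs, sqrt_sq_eq_abs, abs_mul, abs_mul, abs_mul, abs_mul,
          abs_of_pos hb, abs_abs, abs_of_nonneg (sqrt_nonneg _), hσ,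
          abs_of_nonneg (sqrt_nonneg _)]
        ring_nf
    _ < 1 + (a - 1) * √(1 + t ^ 2) ^ 2 :=
        mul_add_sqrt_lt hb (by positivity) hyx
    _ = 1 + (a - 1) * (1 + t ^ 2) := by rw [hx]

theorem shear_slope_bound_angle_general (a2 : ℝ) (ha : 4 ≤ a2)
    (u : EuclideanSpace ℝ (Fin 3)) (θ : ℝ)
    (σ : ℝ) (hσ : σ = 1 ∨ σ = -1) :
    -1 < -(1 / (1 + (a2 - 1) * (1 + ‖u‖ ^ 2))) *
          ((a2 - 1) * Real.sqrt (‖u‖ ^ 2) * Real.cos θ * Real.sqrt (1 + ‖u‖ ^ 2)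
            + σ * Real.sqrt (a2 + (a2 - 1) * ‖u‖ ^ 2
                - (a2 - 1) * ‖u‖ ^ 2 * (Real.cos θ) ^ 2)) ∧
    -(1 / (1 + (a2 - 1) * (1 + ‖u‖ ^ 2))) *
          ((a2 - 1) * Real.sqrt (‖u‖ ^ 2) * Real.cos θ * Real.sqrt (1 + ‖u‖ ^ 2)
            + σ * Real.sqrt (a2 + (a2 - 1) * ‖u‖ ^ 2
                - (a2 - 1) * ‖u‖ ^ 2 * (Real.cos θ) ^ 2)) < 1 := by
  have ha1 : 1 < a2 := by linarith
  have hD : 0 < 1 + (a2 - 1) * (1 + ‖u‖ ^ 2) := by nlinarith [sq_nonneg ‖u‖]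
  have hσ1 : |σ| = 1 := by rcases hσ with rfl | rfl <;> norm_num
  have hN := abs_shear_numerator_lt ha1 ‖u‖ (cos θ) σ (abs_cos_le_one θ) hσ1
  refine abs_lt.1 ?_
  rw [abs_mul, abs_neg, abs_of_pos (one_div_pos.2 hD), one_div_mul_eq_div]
  exact (div_lt_one hD).2 hN

/-- For `a₂ ≥ 4`, `u ∈ ℝ³` and `θ ∈ [0, 2π]`, the slopes
`s±(u,θ) = -((a₂-1)√(|u|²) cos θ √(1+|u|²) ± √(a₂+(a₂-1)|u|² - (a₂-1)|u|² cos²θ))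
            / (1+(a₂-1)(1+|u|²))`
of the shear-wave characteristic cone satisfy `-1 < s± < 1` for both signs. -/
theorem shear_slope_bound_angle (a2 : ℝ) (ha : 4 ≤ a2)
    (u : EuclideanSpace ℝ (Fin 3)) (θ : ℝ) (hθ : θ ∈ Set.Icc (0 : ℝ) (2 * Real.pi))
    (σ : ℝ) (hσ : σ = 1 ∨ σ = -1) :
    -1 < -(1 / (1 + (a2 - 1) * (1 + ‖u‖ ^ 2))) *
          ((a2 - 1) * Real.sqrt (‖u‖ ^ 2) * Real.cos θ * Real.sqrt (1 + ‖u‖ ^ 2)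
            + σ * Real.sqrt (a2 + (a2 - 1) * ‖u‖ ^ 2
                - (a2 - 1) * ‖u‖ ^ 2 * (Real.cos θ) ^ 2)) ∧
    -(1 / (1 + (a2 - 1) * (1 + ‖u‖ ^ 2))) *
          ((a2 - 1) * Real.sqrt (‖u‖ ^ 2) * Real.cos θ * Real.sqrt (1 + ‖u‖ ^ 2)
            + σ * Real.sqrt (a2 + (a2 - 1) * ‖u‖ ^ 2
                - (a2 - 1) * ‖u‖ ^ 2 * (Real.cos θ) ^ 2)) < 1 :=
  shear_slope_bound_angle_general a2 ha u θ σ hσ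
end

section
/- Let $g$ be the Minkowski metric on $\mathbb{R}^4$ with signature $(-,+,+,+)$ and let $u \in \mathbb{R}^4$ be a timelike vector with $g(u,u) = -1$, written $u = (u^0, \underline{u})$ with $u^0 = \sqrt{1+|\underline{u}|^2}$. For $a_2 \geq 4$, the quadratic form $Q(\xi) = (a_2-1)(u^\mu \xi_\mu)^2 - \xi^\mu\xi_\mu$ on covectors $\xi$ (indices raised with the Minkowski metric) is a hyperbolic quadratic form: for every nonzero $(\xi_1,\xi_2,\xi_3) \in \mathbb{R}^3$, the equation $Q(\xi_0, \xi_1, \xi_2, \xi_3) = 0$ has exactly two distinct real roots $\xi_0$. -/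
/-!
Writing `k = a₂ - 1`, `s = u̲ · ξ̲` and `T = |ξ̲|²`, the form is the quadratic
`(k (u⁰)² + 1) x² + 2 k u⁰ s x + (k s² - T)` in `x = ξ₀`, whose discriminant is
`4 (k ((u⁰)² T - s²) + T)`. By Cauchy–Schwarz and `|u̲|² < (u⁰)²` we have `s² ≤ (u⁰)² T`,
so the discriminant is positive as soon as `ξ̲ ≠ 0`.
-/

theorem exists_ne_roots_of_discrim_pos {a b c : ℝ} (ha : a ≠ 0) (hd : 0 < discrim a b c) :
    ∃ r₁ r₂ : ℝ, r₁ ≠ r₂ ∧ ∀ x : ℝ, a * (x * x) + b * x + c = 0 ↔ x = r₁ ∨ x = r₂ := by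
  have hsqrt : discrim a b c = √(discrim a b c) * √(discrim a b c) :=
    (Real.mul_self_sqrt hd.le).symm
  refine ⟨(-b + √(discrim a b c)) / (2 * a), (-b - √(discrim a b c)) / (2 * a), ?_,
    quadratic_eq_zero_iff ha hsqrt⟩
  have h2a : 2 * a ≠ 0 := mul_ne_zero two_ne_zero ha
  have hpos : 0 < √(discrim a b c) := Real.sqrt_pos.mpr hd
  rw [Ne, div_left_inj' h2a]
  linarith

theorem discrim_shear (k w s T : ℝ) :
    discrim (k * w ^ 2 + 1) (2 * k * w * s) (k * s ^ 2 - T) = 4 * (k * (w ^ 2 * T - s ^ 2) + T) := by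
  unfold discrim
  ring

theorem sq_dot_le_three (a₁ a₂ a₃ b₁ b₂ b₃ : ℝ) :
    (a₁ * b₁ + a₂ * b₂ + a₃ * b₃) ^ 2 ≤ (a₁ ^ 2 + a₂ ^ 2 + a₃ ^ 2) * (b₁ ^ 2 + b₂ ^ 2 + b₃ ^ 2) := by
  simpa [Fin.sum_univ_three, add_assoc] using
    Finset.sum_mul_sq_le_sq_mul_sq Finset.univ ![a₁, a₂, a₃] ![b₁, b₂, b₃]

theorem sum_sq_three_pos {x y z : ℝ} (h : ¬(x = 0 ∧ y = 0 ∧ z = 0)) :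
    0 < x ^ 2 + y ^ 2 + z ^ 2 := by
  rcases not_and_or.mp h with hx | hyz
  · positivity
  rcases not_and_or.mp hyz with hy | hz <;> positivity

theorem shear_quadratic_hyperbolic_general (a2 : ℝ) (ha : 4 ≤ a2) (u : Fin 4 → ℝ)
    (hnorm : -(u 0) ^ 2 + (u 1) ^ 2 + (u 2) ^ 2 + (u 3) ^ 2 = -1)
    (ξ1 ξ2 ξ3 : ℝ) (hξ : ¬(ξ1 = 0 ∧ ξ2 = 0 ∧ ξ3 = 0)) :
    ∃ r1 r2 : ℝ, r1 ≠ r2 ∧ ∀ x : ℝ,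
      (a2 - 1) * (u 0 * x + u 1 * ξ1 + u 2 * ξ2 + u 3 * ξ3) ^ 2
          - (-(x ^ 2) + ξ1 ^ 2 + ξ2 ^ 2 + ξ3 ^ 2) = 0
        ↔ (x = r1 ∨ x = r2) := by
  set s := u 1 * ξ1 + u 2 * ξ2 + u 3 * ξ3
  set T := ξ1 ^ 2 + ξ2 ^ 2 + ξ3 ^ 2
  have hk : 0 ≤ a2 - 1 := by linarith
  have hT : 0 < T := sum_sq_three_pos hξ
  have hs : s ^ 2 ≤ u 0 ^ 2 * T :=
    (sq_dot_le_three _ _ _ _ _ _).trans (mul_le_mul_of_nonneg_right (by linarith) hT.le)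
  have hA : (a2 - 1) * u 0 ^ 2 + 1 ≠ 0 := by positivity
  have hd : 0 < discrim ((a2 - 1) * u 0 ^ 2 + 1) (2 * (a2 - 1) * u 0 * s) ((a2 - 1) * s ^ 2 - T) := by
    rw [discrim_shear]
    have := mul_nonneg hk (sub_nonneg.mpr hs)
    positivity
  obtain ⟨r1, r2, hne, hroots⟩ := exists_ne_roots_of_discrim_pos hA hd
  refine ⟨r1, r2, hne, fun x => ?_⟩
  rw [← hroots x]
  constructor <;> intro h <;> linear_combination h

/-- Hyperbolicity of the shear-wave quadratic form
`Q(ξ) = (a₂-1)(uᵘξᵤ)² - ξᵘξᵤ` in Minkowski background (signature `(-,+,+,+)`)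
with `u` unit timelike, `u⁰ = √(1+|u̲|²)`: for every nonzero spatial covector
`(ξ₁,ξ₂,ξ₃)` the equation `Q = 0` has exactly two distinct real roots `ξ₀`. -/
theorem shear_quadratic_hyperbolic (a2 : ℝ) (ha : 4 ≤ a2) (u : Fin 4 → ℝ)
    (hu0 : u 0 = Real.sqrt (1 + (u 1) ^ 2 + (u 2) ^ 2 + (u 3) ^ 2))
    (hnorm : -(u 0) ^ 2 + (u 1) ^ 2 + (u 2) ^ 2 + (u 3) ^ 2 = -1)
    (ξ1 ξ2 ξ3 : ℝ) (hξ : ¬(ξ1 = 0 ∧ ξ2 = 0 ∧ ξ3 = 0)) :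
    ∃ r1 r2 : ℝ, r1 ≠ r2 ∧ ∀ x : ℝ,
      (a2 - 1) * (u 0 * x + u 1 * ξ1 + u 2 * ξ2 + u 3 * ξ3) ^ 2
          - (-(x ^ 2) + ξ1 ^ 2 + ξ2 ^ 2 + ξ3 ^ 2) = 0
        ↔ (x = r1 ∨ x = r2) :=
  shear_quadratic_hyperbolic_general a2 ha u hnorm ξ1 ξ2 ξ3 hξ
end

section
/- Let $g$ be the Minkowski metric on $\mathbb{R}^4$ and $u \in \mathbb{R}^4$ timelike with $g(u,u) = -1$, $u^0 > 0$. For $a_2 \geq 4$, the quadratic form $p_3(\xi) = -6((a_2+5)a_2 + (a_2^2+7a_2-8)(u^\lambda u_\lambda))(u^\mu\xi_\mu)^2 + 6(a_2+2)(1+5u^\lambda u_\lambda)\xi^\mu\xi_\mu$ with $u^\lambda u_\lambda = -1$ is hyperbolic: for every nonzero spatial covector $(\xi_1,\xi_2,\xi_3)$, the equation $p_3(\xi) = 0$ has exactly two distinct real roots $\xi_0$. -/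
lemma quad_aux (A B C : ℝ) (hA : 0 < A) (hD : 0 < discrim A B C) :
    ∃ r1 r2 : ℝ, r1 ≠ r2 ∧ ∀ x : ℝ,
      A * x ^ 2 + B * x + C = 0 ↔ (x = r1 ∨ x = r2) := by
  have hAne : A ≠ 0 := ne_of_gt hA
  have hdpos : 0 < Real.sqrt (discrim A B C) := Real.sqrt_pos.mpr hD
  have hdd : discrim A B C = Real.sqrt (discrim A B C) * Real.sqrt (discrim A B C) :=
    (Real.mul_self_sqrt hD.le).symm
  refine ⟨(-B + Real.sqrt (discrim A B C)) / (2 * A),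
          (-B - Real.sqrt (discrim A B C)) / (2 * A), ?_, ?_⟩
  · intro h
    rw [div_eq_div_iff (by positivity) (by positivity)] at h
    nlinarith
  · intro x
    have := quadratic_eq_zero_iff hAne hdd x
    rw [← this]; ring_nf

/-- Hyperbolicity of the sound-wave quadratic form
`p₃(ξ) = -6((a₂+5)a₂ + (a₂²+7a₂-8)(uᵘuᵤ))(uᵘξᵤ)² + 6(a₂+2)(1+5uᵘuᵤ)ξᵘξᵤ`
in Minkowski background (signature `(-,+,+,+)`) with `u` unit timelike
(`uᵘuᵤ = -1`), future pointing: for every nonzero spatial covector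
`(ξ₁,ξ₂,ξ₃)` the equation `p₃ = 0` has exactly two distinct real roots `ξ₀`. -/
theorem sound_quadratic_hyperbolic (a2 : ℝ) (ha : 4 ≤ a2) (u : Fin 4 → ℝ)
    (hu0 : 0 < u 0)
    (hnorm : -(u 0) ^ 2 + (u 1) ^ 2 + (u 2) ^ 2 + (u 3) ^ 2 = -1)
    (ξ1 ξ2 ξ3 : ℝ) (hξ : ¬(ξ1 = 0 ∧ ξ2 = 0 ∧ ξ3 = 0)) :
    ∃ r1 r2 : ℝ, r1 ≠ r2 ∧ ∀ x : ℝ,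
      -6 * ((a2 + 5) * a2
            + (a2 ^ 2 + 7 * a2 - 8)
              * (-(u 0) ^ 2 + (u 1) ^ 2 + (u 2) ^ 2 + (u 3) ^ 2))
          * (u 0 * x + u 1 * ξ1 + u 2 * ξ2 + u 3 * ξ3) ^ 2
        + 6 * (a2 + 2)
          * (1 + 5 * (-(u 0) ^ 2 + (u 1) ^ 2 + (u 2) ^ 2 + (u 3) ^ 2))
          * (-(x ^ 2) + ξ1 ^ 2 + ξ2 ^ 2 + ξ3 ^ 2) = 0
        ↔ (x = r1 ∨ x = r2) := by
  have hq : 0 < ξ1 ^ 2 + ξ2 ^ 2 + ξ3 ^ 2 := by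
    rcases lt_or_eq_of_le (by positivity : (0:ℝ) ≤ ξ1 ^ 2 + ξ2 ^ 2 + ξ3 ^ 2) with h | h
    · exact h
    · exfalso; apply hξ
      refine ⟨?_, ?_, ?_⟩ <;>
        nlinarith [sq_nonneg ξ1, sq_nonneg ξ2, sq_nonneg ξ3]
  have hCS : (u 1 * ξ1 + u 2 * ξ2 + u 3 * ξ3) ^ 2
      ≤ ((u 1) ^ 2 + (u 2) ^ 2 + (u 3) ^ 2) * (ξ1 ^ 2 + ξ2 ^ 2 + ξ3 ^ 2) := by
    nlinarith [sq_nonneg (u 1 * ξ2 - u 2 * ξ1), sq_nonneg (u 1 * ξ3 - u 3 * ξ1),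
      sq_nonneg (u 2 * ξ3 - u 3 * ξ2)]
  have hkey : ξ1 ^ 2 + ξ2 ^ 2 + ξ3 ^ 2
      ≤ (u 0) ^ 2 * (ξ1 ^ 2 + ξ2 ^ 2 + ξ3 ^ 2)
        - (u 1 * ξ1 + u 2 * ξ2 + u 3 * ξ3) ^ 2 := by nlinarith
  have hApos : 0 < 12 * (a2 - 4) * (u 0) ^ 2 + 24 * (a2 + 2) := by
    nlinarith [sq_nonneg (u 0)]
  have hDpos : 0 < discrim (12 * (a2 - 4) * (u 0) ^ 2 + 24 * (a2 + 2))
      (24 * (a2 - 4) * (u 0) * (u 1 * ξ1 + u 2 * ξ2 + u 3 * ξ3))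
      (12 * (a2 - 4) * (u 1 * ξ1 + u 2 * ξ2 + u 3 * ξ3) ^ 2
        - 24 * (a2 + 2) * (ξ1 ^ 2 + ξ2 ^ 2 + ξ3 ^ 2)) := by
    have hDval : discrim (12 * (a2 - 4) * (u 0) ^ 2 + 24 * (a2 + 2))
        (24 * (a2 - 4) * (u 0) * (u 1 * ξ1 + u 2 * ξ2 + u 3 * ξ3))
        (12 * (a2 - 4) * (u 1 * ξ1 + u 2 * ξ2 + u 3 * ξ3) ^ 2
          - 24 * (a2 + 2) * (ξ1 ^ 2 + ξ2 ^ 2 + ξ3 ^ 2))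
        = 1152 * (a2 + 2) * ((a2 - 4) * ((u 0) ^ 2 * (ξ1 ^ 2 + ξ2 ^ 2 + ξ3 ^ 2)
            - (u 1 * ξ1 + u 2 * ξ2 + u 3 * ξ3) ^ 2)
          + 2 * (a2 + 2) * (ξ1 ^ 2 + ξ2 ^ 2 + ξ3 ^ 2)) := by
      rw [discrim]; ring
    rw [hDval]
    have h1 : 0 ≤ (a2 - 4) * ((u 0) ^ 2 * (ξ1 ^ 2 + ξ2 ^ 2 + ξ3 ^ 2)
        - (u 1 * ξ1 + u 2 * ξ2 + u 3 * ξ3) ^ 2) :=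
      mul_nonneg (by linarith) (by linarith)
    have h2 : 0 < 2 * (a2 + 2) * (ξ1 ^ 2 + ξ2 ^ 2 + ξ3 ^ 2) :=
      mul_pos (by linarith) hq
    exact mul_pos (by linarith) (by linarith)
  obtain ⟨r1, r2, hne, hiff⟩ := quad_aux _ _ _ hApos hDpos
  refine ⟨r1, r2, hne, fun x => ?_⟩
  rw [hnorm]
  rw [show -6 * ((a2 + 5) * a2 + (a2 ^ 2 + 7 * a2 - 8) * (-1 : ℝ))
          * (u 0 * x + u 1 * ξ1 + u 2 * ξ2 + u 3 * ξ3) ^ 2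
        + 6 * (a2 + 2) * (1 + 5 * (-1 : ℝ)) * (-(x ^ 2) + ξ1 ^ 2 + ξ2 ^ 2 + ξ3 ^ 2)
      = (12 * (a2 - 4) * (u 0) ^ 2 + 24 * (a2 + 2)) * x ^ 2
        + (24 * (a2 - 4) * (u 0) * (u 1 * ξ1 + u 2 * ξ2 + u 3 * ξ3)) * x
        + (12 * (a2 - 4) * (u 1 * ξ1 + u 2 * ξ2 + u 3 * ξ3) ^ 2
          - 24 * (a2 + 2) * (ξ1 ^ 2 + ξ2 ^ 2 + ξ3 ^ 2)) from by ring]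
  exact hiff x
end

section
/- Let $u, \xi \in \mathbb{R}^3$ and $a_2 \geq 4$. Define $D = 1 + (a_2-1)(1+|u|^2)$, $A = (a_2-1)(u\cdot\xi)\sqrt{1+|u|^2}$, and $B = \sqrt{(a_2+(a_2-1)|u|^2)|\xi|^2 - (a_2-1)(u\cdot\xi)^2}$. Then the two numbers $\xi_{0,\pm} = -(A \pm B)/D$ satisfy $|\xi_{0,\pm}| < |\xi|$ whenever $\xi \neq 0$. -/
/-!
With `c = √(1 + |u|²)`, `k = a₂ - 1`, `t = u · ξ` and `n = |ξ|` one has `D = 1 + k c²`, `A = k t c` and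
`B² = D n² - k t²`, so `|ξ₀,±| < n` follows from `|A| + B < D n`. Squaring, this reduces to the identity
`(D n - |A|)² - B² = D k (c n - |t|)²`, which is positive because `|t| ≤ |u| n < c n` by Cauchy–Schwarz.
-/

open Real
open scoped RealInnerProductSpace

lemma sqrt_lt_sub_abs_mul_mul {k c n t : ℝ} (hk : 0 < k) (hc : 0 ≤ c) (htc : |t| < c * n) :
    √((1 + k * c ^ 2) * n ^ 2 - k * t ^ 2) < (1 + k * c ^ 2) * n - |k * t * c| := by
  have hcn : 0 < c * n - |t| := by linarith
  have hn : 0 < n := pos_of_mul_pos_right (by linarith [abs_nonneg t]) hc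
  have habs : |k * t * c| = k * |t| * c := by
    rw [abs_mul, abs_mul, abs_of_pos hk, abs_of_nonneg hc]
  have hdiff_sq : ((1 + k * c ^ 2) * n - k * |t| * c) ^ 2 - ((1 + k * c ^ 2) * n ^ 2 - k * t ^ 2)
      = (1 + k * c ^ 2) * k * (c * n - |t|) ^ 2 := by
    rw [← sq_abs t]; ring
  have hrhs : (1 + k * c ^ 2) * n - k * |t| * c = n + k * c * (c * n - |t|) := by ring
  rw [habs, sqrt_lt' (by rw [hrhs]; positivity)]
  linarith [hdiff_sq, mul_pos (mul_pos (by positivity : 0 < 1 + k * c ^ 2) hk) (pow_pos hcn 2)]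

lemma abs_neg_add_div_lt {x y D n : ℝ} (hD : 0 < D) (h : |x| + |y| < D * n) :
    |-(x + y) / D| < n := by
  rw [abs_div, abs_neg, abs_of_pos hD, div_lt_iff₀ hD, mul_comm]
  exact (abs_add_le x y).trans_lt h

lemma abs_neg_sub_div_lt {x y D n : ℝ} (hD : 0 < D) (h : |x| + |y| < D * n) :
    |-(x - y) / D| < n :=
  sub_eq_add_neg x y ▸ abs_neg_add_div_lt hD (by rwa [abs_neg])

lemma abs_real_inner_lt_sqrt_one_add_norm_sq_mul {E : Type*} [NormedAddCommGroup E]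
    [InnerProductSpace ℝ E] (u : E) {ξ : E} (hξ : ξ ≠ 0) :
    |⟪u, ξ⟫| < √(1 + ‖u‖ ^ 2) * ‖ξ‖ := by
  have hu : ‖u‖ < √(1 + ‖u‖ ^ 2) := (lt_sqrt (norm_nonneg u)).2 (by linarith)
  calc |⟪u, ξ⟫| ≤ ‖u‖ * ‖ξ‖ := abs_real_inner_le_norm u ξ
    _ < √(1 + ‖u‖ ^ 2) * ‖ξ‖ := mul_lt_mul_of_pos_right hu (norm_pos_iff.2 hξ)

/-- Causality of the shear waves: the roots `ξ₀,± = -(A ± B)/D` of the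
shear-wave characteristic polynomial satisfy `|ξ₀,±| < |ξ|` for `ξ ≠ 0`. -/
theorem shear_roots_inside_light_cone (a2 : ℝ) (ha : 4 ≤ a2)
    (u ξ : EuclideanSpace ℝ (Fin 3)) (hξ : ξ ≠ 0) :
    let D : ℝ := 1 + (a2 - 1) * (1 + ‖u‖ ^ 2)
    let A : ℝ := (a2 - 1) * (inner ℝ u ξ : ℝ) * Real.sqrt (1 + ‖u‖ ^ 2)
    let B : ℝ := Real.sqrt ((a2 + (a2 - 1) * ‖u‖ ^ 2) * ‖ξ‖ ^ 2
        - (a2 - 1) * (inner ℝ u ξ : ℝ) ^ 2)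
    |(-(A + B)) / D| < ‖ξ‖ ∧ |(-(A - B)) / D| < ‖ξ‖ := by
  intro D A B
  have hc_sq : √(1 + ‖u‖ ^ 2) ^ 2 = 1 + ‖u‖ ^ 2 := sq_sqrt (by positivity)
  have hk : 0 < a2 - 1 := by linarith
  have hD : 0 < D := by positivity
  have hB : B = √(D * ‖ξ‖ ^ 2 - (a2 - 1) * ⟪u, ξ⟫ ^ 2) := by
    simp only [B, D]; ring_nf
  have hsum : |A| + |B| < D * ‖ξ‖ := by
    have key := sqrt_lt_sub_abs_mul_mul hk (sqrt_nonneg _)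
      (abs_real_inner_lt_sqrt_one_add_norm_sq_mul u hξ)
    rw [hc_sq, ← hB] at key
    rw [abs_of_nonneg (sqrt_nonneg _)]
    linarith
  exact ⟨abs_neg_add_div_lt hD hsum, abs_neg_sub_div_lt hD hsum⟩
end

section
/- Let $u, \xi \in \mathbb{R}^3$, $\xi \neq 0$, and $a_2 \geq 4$. Define $D = -2(2+a_2) - (a_2-4)(1+|u|^2)$, $A = (a_2-4)(u\cdot\xi)\sqrt{1+|u|^2}$, and $B = \sqrt{2}\sqrt{(3a_2(2+a_2)+(a_2^2-2a_2-8)|u|^2)|\xi|^2 - (a_2^2-2a_2-8)(u\cdot\xi)^2}$. Then the two numbers $\xi_{0,\pm} = (A \pm B)/D$ are real and distinct. -/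
/-!
The two roots differ by `2B / D`, so it suffices that `D < 0` and `B > 0`. The first is immediate
from `a₂ ≥ 4`. For the second, the radicand is `3a₂(2 + a₂)|ξ|² + (a₂ - 4)(a₂ + 2)(|u|²|ξ|² - (u·ξ)²)`,
a positive term plus a nonnegative one by Cauchy–Schwarz.
-/

theorem div_add_ne_div_sub {K : Type*} [Field K] [CharZero K] {A B D : K}
    (hD : D ≠ 0) (hB : B ≠ 0) : (A + B) / D ≠ (A - B) / D := by
  intro h
  have hAB : A + B = A - B := (div_left_inj' hD).mp h
  exact hB (self_eq_neg.mp (by linear_combination hAB))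

theorem real_inner_sq_le_norm_sq_mul_norm_sq {E : Type*} [NormedAddCommGroup E]
    [InnerProductSpace ℝ E] (u v : E) : inner ℝ u v ^ 2 ≤ ‖u‖ ^ 2 * ‖v‖ ^ 2 := by
  rw [← mul_pow, ← sq_abs]
  exact pow_le_pow_left₀ (abs_nonneg _) (abs_real_inner_le_norm u v) 2

theorem add_mul_norm_sq_mul_norm_sq_sub_mul_inner_sq_pos {E : Type*} [NormedAddCommGroup E]
    [InnerProductSpace ℝ E] {k c : ℝ} (hk : 0 < k) (hc : 0 ≤ c) (u : E) {v : E} (hv : v ≠ 0) :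
    0 < (k + c * ‖u‖ ^ 2) * ‖v‖ ^ 2 - c * inner ℝ u v ^ 2 := by
  have hcs := real_inner_sq_le_norm_sq_mul_norm_sq u v
  have hv' : 0 < ‖v‖ ^ 2 := by positivity
  nlinarith [mul_nonneg hc (sub_nonneg.mpr hcs), mul_pos hk hv']

/-- Hyperbolicity of the sound-wave polynomial: the roots `ξ₀,± = (A ± B)/D`
of `p₃` are real and distinct for `ξ ≠ 0` and `a₂ ≥ 4`. -/
theorem sound_roots_distinct (a2 : ℝ) (ha : 4 ≤ a2)
    (u ξ : EuclideanSpace ℝ (Fin 3)) (hξ : ξ ≠ 0) :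
    let D : ℝ := -2 * (2 + a2) - (a2 - 4) * (1 + ‖u‖ ^ 2)
    let A : ℝ := (a2 - 4) * (inner ℝ u ξ : ℝ) * Real.sqrt (1 + ‖u‖ ^ 2)
    let B : ℝ := Real.sqrt 2 * Real.sqrt
        ((3 * a2 * (2 + a2) + (a2 ^ 2 - 2 * a2 - 8) * ‖u‖ ^ 2) * ‖ξ‖ ^ 2
          - (a2 ^ 2 - 2 * a2 - 8) * (inner ℝ u ξ : ℝ) ^ 2)
    (A + B) / D ≠ (A - B) / D := by
  intro D A B
  have hD : D < 0 := by
    have : 0 ≤ (a2 - 4) * (1 + ‖u‖ ^ 2) := mul_nonneg (by linarith) (by positivity)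
    linarith
  have hradicand := add_mul_norm_sq_mul_norm_sq_sub_mul_inner_sq_pos
    (k := 3 * a2 * (2 + a2)) (c := a2 ^ 2 - 2 * a2 - 8) (by nlinarith) (by nlinarith) u hξ
  have hB : 0 < B := mul_pos (by positivity) (Real.sqrt_pos.mpr hradicand)
  exact div_add_ne_div_sub hD.ne hB.ne'
end
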